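/- Proposition 1 (ℓ1 proximal step, matrix form): Given Y ∈ ℝ^{M×N} and z ∈ ℝ^N with z ≠ 0, the unique minimizer of f(X) = ‖Xz‖₁ + (1/2)‖X−Y‖_F² is X̂ = Y − S_z(Yz)z', where z := ‖z‖₂² and S_z is applied entrywise with S_z(x) := sign(x)·min(|x|/z, 1). -/

import Mathlib

/-!
If `Y - X̂` is a subgradient of a convex `g` at `X̂`, then expanding the square gives
`g X + ½‖X - Y‖² ≥ g X̂ + ½‖X̂ - Y‖² + ½‖X - X̂‖²`, which is optimality and uniqueness at once.
The objective splits over rows. In row `i`, with `b = ⟨y, z⟩` and `s = S_z(b)`, the row of `Y - X̂`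
is `s • z`, a subgradient of `x ↦ |⟨x, z⟩|` at `x̂ = y - s • z` because `|s| ≤ 1` and
`s ⟨x̂, z⟩ = |⟨x̂, z⟩|`: `S_z(b)` is `b / ‖z‖²` clamped to `[-1, 1]`, so either
`⟨x̂, z⟩ = b - s ‖z‖²` vanishes or `s = ±1` has its sign.
-/

open Matrix

/-- The paper's `S_z`, with `c = ‖z‖₂²`. -/
noncomputable def clipDiv (c x : ℝ) : ℝ := Real.sign x * min (|x| / c) 1

lemma clipDiv_eq_max_min {c : ℝ} (hc : 0 < c) (x : ℝ) :
    clipDiv c x = max (-1) (min (x / c) 1) := by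
  rcases lt_trichotomy x 0 with hx | rfl | hx
  · have hxc : x / c < 0 := div_neg_of_neg_of_pos hx hc
    rw [clipDiv, Real.sign_of_neg hx, abs_of_neg hx, neg_div, min_eq_left (by linarith : x / c ≤ 1)]
    rcases le_total (-(x / c)) 1 with h | h
    · rw [min_eq_left h, max_eq_right (by linarith)]; ring
    · rw [min_eq_right h, max_eq_left (by linarith)]; ring
  · simp [clipDiv]
  · have hxc : 0 < x / c := div_pos hx hc
    rw [clipDiv, Real.sign_of_pos hx, abs_of_pos hx, one_mul,
      max_eq_right (by linarith [le_min hxc.le zero_le_one])]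

lemma abs_clipDiv_le_one {c : ℝ} (hc : 0 < c) (x : ℝ) : |clipDiv c x| ≤ 1 := by
  rw [clipDiv_eq_max_min hc, abs_le]
  exact ⟨le_max_left _ _, max_le (by norm_num) (min_le_right _ _)⟩

lemma clipDiv_mul_sub_mul_self {c : ℝ} (hc : 0 < c) (x : ℝ) :
    clipDiv c x * (x - clipDiv c x * c) = |x - clipDiv c x * c| := by
  rw [clipDiv_eq_max_min hc]
  rcases le_total (x / c) (-1) with h | h
  · rw [min_eq_left (by linarith), max_eq_left h, abs_of_nonpos] <;>
      [ring; linarith [(div_le_iff₀ hc).mp h]]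
  rcases le_total (x / c) 1 with h' | h'
  · rw [min_eq_left h', max_eq_right h, div_mul_cancel₀ x hc.ne']
    simp
  · rw [min_eq_right h', max_eq_right (by norm_num), abs_of_nonneg] <;>
      [ring; linarith [(le_div_iff₀ hc).mp h']]

lemma abs_add_mul_sub_le_abs {s u : ℝ} (hs : |s| ≤ 1) (hsu : s * u = |u|) (v : ℝ) :
    |u| + s * (v - u) ≤ |v| :=
  calc |u| + s * (v - u) = s * v := by rw [← hsu]; ring
    _ ≤ |s| * |v| := by rw [← abs_mul]; exact le_abs_self _
    _ ≤ |v| := mul_le_of_le_one_left (abs_nonneg v) hs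

section

variable {n : Type*} [Fintype n]

lemma dotProduct_self_pos {z : n → ℝ} (hz : z ≠ 0) : 0 < z ⬝ᵥ z := by
  simpa using dotProduct_self_star_pos_iff.mpr hz

theorem abs_dotProduct_add_half_sum_sq_le_of_subgradient {y z : n → ℝ} {s : ℝ} (hs : |s| ≤ 1)
    (hsub : s * ((y - s • z) ⬝ᵥ z) = |(y - s • z) ⬝ᵥ z|) (x : n → ℝ) :
    |(y - s • z) ⬝ᵥ z| + 1 / 2 * ∑ j, ((y - s • z) j - y j) ^ 2 +
        1 / 2 * ∑ j, (x j - (y - s • z) j) ^ 2 ≤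
      |x ⬝ᵥ z| + 1 / 2 * ∑ j, (x j - y j) ^ 2 := by
  set xh := y - s • z
  have hsubgrad := abs_add_mul_sub_le_abs hs hsub (x ⬝ᵥ z)
  have hexpand : ∑ j, (x j - y j) ^ 2 =
      ∑ j, (x j - xh j) ^ 2 + ∑ j, (xh j - y j) ^ 2 - 2 * s * ((x - xh) ⬝ᵥ z) := by
    simp only [dotProduct, Finset.mul_sum, ← Finset.sum_add_distrib, ← Finset.sum_sub_distrib]
    refine Finset.sum_congr rfl fun j _ => ?_
    simp only [xh, Pi.sub_apply, Pi.smul_apply, smul_eq_mul]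
    ring
  rw [sub_dotProduct] at hexpand
  linarith

theorem clipDiv_mul_sub_smul_dotProduct (y : n → ℝ) {z : n → ℝ} (hz : z ≠ 0) :
    clipDiv (z ⬝ᵥ z) (y ⬝ᵥ z) * ((y - clipDiv (z ⬝ᵥ z) (y ⬝ᵥ z) • z) ⬝ᵥ z) =
      |(y - clipDiv (z ⬝ᵥ z) (y ⬝ᵥ z) • z) ⬝ᵥ z| := by
  rw [sub_dotProduct, smul_dotProduct, smul_eq_mul]
  exact clipDiv_mul_sub_mul_self (dotProduct_self_pos hz) _

end

theorem prop1_ell1_prox_matrix {M N : ℕ}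
    (Y : Matrix (Fin M) (Fin N) ℝ) (z : Fin N → ℝ) (hz : z ≠ 0) :
    let zn : ℝ := ∑ j, z j ^ 2
    let Sz : ℝ → ℝ := fun x => Real.sign x * min (|x| / zn) 1
    let Xhat : Matrix (Fin M) (Fin N) ℝ :=
      Y - Matrix.of (fun i j => Sz (Y.mulVec z i) * z j)
    ∀ X : Matrix (Fin M) (Fin N) ℝ, X ≠ Xhat →
      (∑ i, |Xhat.mulVec z i|) + (1 / 2) * (∑ i, ∑ j, (Xhat i j - Y i j) ^ 2) <
        (∑ i, |X.mulVec z i|) + (1 / 2) * (∑ i, ∑ j, (X i j - Y i j) ^ 2) := by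
  intro zn Sz Xhat X hX
  have hzn : zn = z ⬝ᵥ z := by simp only [zn, dotProduct, sq]
  have hrow (i : Fin M) : |(Xhat *ᵥ z) i| + 1 / 2 * ∑ j, (Xhat i j - Y i j) ^ 2 +
      1 / 2 * ∑ j, (X i j - Xhat i j) ^ 2 ≤ |(X *ᵥ z) i| + 1 / 2 * ∑ j, (X i j - Y i j) ^ 2 := by
    have hs := abs_clipDiv_le_one (dotProduct_self_pos hz) (Y i ⬝ᵥ z)
    have := abs_dotProduct_add_half_sum_sq_le_of_subgradient hs (clipDiv_mul_sub_smul_dotProduct (Y i) hz) (X i)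
    rw [← hzn] at this
    exact this
  have hgap : 0 < ∑ i, ∑ j, (X i j - Xhat i j) ^ 2 := by
    obtain ⟨i, j, hij⟩ : ∃ i j, X i j ≠ Xhat i j := by
      by_contra! h
      exact hX (Matrix.ext h)
    refine Finset.sum_pos' (fun i _ => Finset.sum_nonneg fun j _ => sq_nonneg _)
      ⟨i, Finset.mem_univ _, Finset.sum_pos' (fun j _ => sq_nonneg _) ⟨j, Finset.mem_univ _, ?_⟩⟩
    exact sq_pos_of_ne_zero (sub_ne_zero.mpr hij)
  have hsum := Finset.sum_le_sum fun i (_ : i ∈ Finset.univ) => hrow i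
  simp only [Finset.sum_add_distrib, ← Finset.mul_sum] at hsum
  linarith
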